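/- Let l be a positive integer and let S be a tree containing pairwise vertex-disjoint paths P₁,…,P_l. Then there exist two subtrees S₁ and S₂ which divide S such that S₁ contains at least l/3 − 1 of the paths P_i as subgraphs, and S₂ also contains at least l/3 − 1 of the paths P_i as subgraphs. -/

import Mathlib

/-!
Weight a vertex set `A` of the tree by the number of paths `P i` lying inside `A`; disjoint sets
have total weight at most `l`. Such a weight has a centroid `c`: every component of `S - c`
weighs at most `l / 2`. (Otherwise take a component `branch c x` of weight `> l / 2` with the
fewest vertices, and let `d` be the neighbour of `c` in it. The component of `S - d` containing
`c` is disjoint from `branch c x`, so it is light, and every other component of `S - d` is a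
proper subset of `branch c x`, so it is light by minimality: `d` is a centroid.)

All but at most one path avoid `c`, and each of them lies in a single component of `S - c`.
If one component contains at least `l / 3 - 1` of them, take it as `U`; otherwise a minimal
family of components containing at least `l / 3 - 1` of them contains at most `2 l / 3`, and `U`
is its union. Then `S[U ∪ {c}]` and `S[V \ U]` divide `S` and meet in `c`.
-/

/-- Two subtrees (connected subgraphs) `A` and `B` *divide* the tree `S` if together
they cover `S` and they intersect in exactly one vertex. -/
def Divides {V : Type*} {S : SimpleGraph V} (A B : S.Subgraph) : Prop :=
  A.Connected ∧ B.Connected ∧ A ⊔ B = ⊤ ∧ ∃ v, A.verts ∩ B.verts = {v}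

open Finset

namespace Finset

variable {α ι κ : Type*}

lemma exists_subset_sum_bounds [DecidableEq α] (t : Finset α) (f : α → ℕ) (l : ℕ)
    (hf : ∀ a ∈ t, 2 * f a ≤ l) (ht : l ≤ ∑ a ∈ t, f a + 1) :
    ∃ s ⊆ t, l ≤ 3 * ∑ a ∈ s, f a + 3 ∧ 3 * ∑ a ∈ s, f a ≤ 2 * l := by
  by_cases hbig : ∃ a ∈ t, l ≤ 3 * f a + 3
  · obtain ⟨a, ha, hla⟩ := hbig
    refine ⟨{a}, singleton_subset_iff.mpr ha, ?_, ?_⟩ <;> rw [sum_singleton]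
    · exact hla
    · have := hf a ha
      omega
  push Not at hbig
  obtain ⟨s, hs, hmin⟩ := (t.powerset.filter fun s => l ≤ 3 * ∑ a ∈ s, f a + 3).exists_min_image
    card ⟨t, by simp only [mem_filter, mem_powerset]; exact ⟨subset_rfl, by omega⟩⟩
  simp only [mem_filter, mem_powerset, and_imp] at hs hmin
  refine ⟨s, hs.1, hs.2, ?_⟩
  rcases s.eq_empty_or_nonempty with rfl | ⟨a, ha⟩
  · simp
  have herase : 3 * ∑ b ∈ s.erase a, f b + 3 < l := by
    by_contra! h
    have := hmin _ ((erase_subset a s).trans hs.1) h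
    have := card_erase_lt_of_mem ha
    omega
  have hsplit := add_sum_erase s f ha
  have := hbig a (hs.1 ha)
  omega

lemma exists_card_filter_mem_bounds [DecidableEq κ] (T : Finset ι) (φ : ι → κ) (l : ℕ)
    (hfib : ∀ i ∈ T, 2 * #{j ∈ T | φ j = φ i} ≤ l) (hT : l ≤ #T + 1) :
    ∃ K : Finset κ, l ≤ 3 * #{j ∈ T | φ j ∈ K} + 3 ∧ 3 * #{j ∈ T | φ j ∈ K} ≤ 2 * l := by
  obtain ⟨K, -, hK⟩ := exists_subset_sum_bounds (T.image φ) (fun k => #{j ∈ T | φ j = k}) l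
    (forall_mem_image.mpr hfib) (by rwa [← card_eq_sum_card_image])
  rw [sum_card_fiberwise_eq_card_filter] at hK
  exact ⟨K, hK⟩

end Finset

lemma div_three_sub_one_le {l n : ℕ} (h : l ≤ 3 * n + 3) : (l : ℝ) / 3 - 1 ≤ n := by
  have : (l : ℝ) ≤ 3 * n + 3 := by exact_mod_cast h
  linarith

namespace SimpleGraph

variable {V : Type*} {G : SimpleGraph V} {c d e x y z : V}

/-- The vertex set of the component of `G - c` containing `x`; it is empty when `x = c`. -/
def branch (G : SimpleGraph V) (c x : V) : Set V := {y | ∃ p : G.Walk x y, c ∉ p.support}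

lemma mem_branch_self (hx : x ≠ c) : x ∈ G.branch c x :=
  ⟨.nil, by simpa using hx.symm⟩

lemma notMem_branch : c ∉ G.branch c x := fun ⟨p, hp⟩ => hp p.end_mem_support

lemma ne_of_mem_branch (hy : y ∈ G.branch c x) : y ≠ c := by
  rintro rfl
  exact notMem_branch hy

lemma support_subset_branch (p : G.Walk x y) (hp : c ∉ p.support) :
    ∀ z ∈ p.support, z ∈ G.branch c x := by
  classical
  exact fun z hz => ⟨p.takeUntil z hz, fun h => hp (p.support_takeUntil_subset_support hz h)⟩

lemma mem_branch_of_adj (hy : y ∈ G.branch c x) (h : G.Adj y z) (hz : z ≠ c) :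
    z ∈ G.branch c x := by
  obtain ⟨p, hp⟩ := hy
  exact ⟨p.concat h, by simp [Walk.support_concat, hp, hz.symm]⟩

lemma branch_eq_of_mem (hy : y ∈ G.branch c x) : G.branch c x = G.branch c y := by
  obtain ⟨p, hp⟩ := hy
  ext z
  constructor
  · rintro ⟨q, hq⟩
    exact ⟨p.reverse.append q, by simp [Walk.mem_support_append_iff, hp, hq]⟩
  · rintro ⟨q, hq⟩
    exact ⟨p.append q, by simp [Walk.mem_support_append_iff, hp, hq]⟩

lemma exists_adj_mem_branch (hG : G.Connected) (hx : x ≠ c) :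
    ∃ d, G.Adj c d ∧ x ∈ G.branch c d := by
  classical
  obtain ⟨p⟩ := hG.preconnected c x
  have hpath := p.bypass_isPath
  generalize p.bypass = q at hpath
  cases q with
  | nil => exact absurd rfl hx
  | cons h q => exact ⟨_, h, q, ((Walk.cons_isPath_iff h q).mp hpath).2⟩

lemma branch_subset_branch (hcd : G.Adj c d) (hde : G.Adj d e) (hc : c ∉ G.branch d e) :
    G.branch d e ⊆ G.branch c d := by
  rintro z ⟨q, hq⟩
  have hcq : c ∉ q.support := fun h => hc (support_subset_branch q hq c h)
  exact ⟨.cons hde q, by simp [hcd.ne, hcq]⟩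

lemma IsAcyclic.disjoint_branch (hG : G.IsAcyclic) (hcd : G.Adj c d) :
    Disjoint (G.branch d c) (G.branch c d) := by
  rw [Set.disjoint_left]
  rintro z ⟨p, hp⟩ ⟨q, hq⟩
  have hbridge := isBridge_iff_forall_walk_mem_edges.mp
    (isAcyclic_iff_forall_adj_isBridge.mp hG hcd) (p.append q.reverse)
  rw [Walk.edges_append, List.mem_append, Walk.edges_reverse, List.mem_reverse] at hbridge
  rcases hbridge with h | h
  · exact hp (p.snd_mem_support_of_mem_edges h)
  · exact hq (q.fst_mem_support_of_mem_edges h)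

theorem IsTree.exists_forall_two_mul_weight_branch_le [Fintype V] (hG : G.IsTree)
    (w : Set V → ℕ) (l : ℕ) (hw : ∀ A B, Disjoint A B → w A + w B ≤ l) :
    ∃ c, ∀ x, x ≠ c → 2 * w (G.branch c x) ≤ l := by
  classical
  by_contra! hheavy
  obtain ⟨c₀⟩ := hG.1.nonempty
  obtain ⟨x₀, hx₀, hw₀⟩ := hheavy c₀
  obtain ⟨⟨c, x⟩, hcx, hmin⟩ :=
    ({p : V × V | p.2 ≠ p.1 ∧ l < 2 * w (G.branch p.1 p.2)} : Finset (V × V)).exists_min_image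
      (fun p => (G.branch p.1 p.2).ncard) ⟨(c₀, x₀), by simp [hx₀, hw₀]⟩
  simp only [mem_filter, mem_univ, true_and, and_imp, Prod.forall] at hcx hmin
  obtain ⟨d, hcd, hxd⟩ := exists_adj_mem_branch hG.1 hcx.1
  have hwd := hcx.2
  rw [← branch_eq_of_mem hxd] at hwd hmin
  obtain ⟨y, hyd, hwy⟩ := hheavy d
  obtain ⟨e, hde, hye⟩ := exists_adj_mem_branch hG.1 hyd
  rw [← branch_eq_of_mem hye] at hwy
  by_cases hce : c ∈ G.branch d e
  · rw [branch_eq_of_mem hce] at hwy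
    have := hw _ _ (hG.2.disjoint_branch hcd)
    omega
  · have hssub : G.branch d e ⊂ G.branch c d :=
      (branch_subset_branch hcd hde hce).ssubset_of_not_subset
        fun h => notMem_branch (h (mem_branch_self hcd.ne'))
    have := Set.ncard_lt_ncard hssub (Set.toFinite _)
    have := hmin d e hde.ne' hwy
    omega

lemma exists_walk_support_subset_insert {W : Set V} (hc : c ∉ W)
    (hW : ∀ x y, G.Adj x y → y ≠ c → x ∈ W → y ∈ W) (p : G.Walk z c) (hz : z ∈ W) :
    ∃ q : G.Walk c z, ∀ x ∈ q.support, x ∈ insert c W := by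
  induction p with
  | nil => exact absurd hz hc
  | @cons z y c h p ih =>
    by_cases hy : y = c
    · subst hy
      exact ⟨.cons h.symm .nil, by simp [hz]⟩
    · obtain ⟨q, hq⟩ := ih hc hW (hW z y h hy hz)
      refine ⟨q.concat h.symm, fun x hx => ?_⟩
      rw [Walk.support_concat, List.mem_append, List.mem_singleton] at hx
      rcases hx with hx | rfl
      exacts [hq x hx, Set.mem_insert_of_mem c hz]

lemma connected_induce_insert {W : Set V} (hG : G.Connected) (hc : c ∉ W)
    (hW : ∀ x y, G.Adj x y → y ≠ c → x ∈ W → y ∈ W) :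
    ((⊤ : G.Subgraph).induce (insert c W)).Connected := by
  rw [← connected_induce_iff]
  refine induce_connected_of_patches c (Set.mem_insert c W) fun {z} hz => ?_
  obtain ⟨q, hq⟩ : ∃ q : G.Walk c z, ∀ x ∈ q.support, x ∈ insert c W := by
    rcases hz with rfl | hz
    · exact ⟨.nil, by simp⟩
    · exact exists_walk_support_subset_insert hc hW (hG.preconnected z c).some hz
  exact ⟨_, hq, q.start_mem_support, q.end_mem_support,
    q.connected_induce_support.preconnected _ _⟩

lemma divides_induce_insert_induce_compl {W : Set V} (hG : G.Connected) (hc : c ∉ W)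
    (hW : ∀ x y, G.Adj x y → y ≠ c → x ∈ W → y ∈ W) :
    Divides ((⊤ : G.Subgraph).induce (insert c W)) ((⊤ : G.Subgraph).induce Wᶜ) := by
  have hWc : insert c {x | x ∉ W ∧ x ≠ c} = Wᶜ := by
    ext x
    by_cases hx : x = c <;> simp [hx, hc]
  refine ⟨connected_induce_insert hG hc hW, hWc ▸ connected_induce_insert hG (by simp) ?_,
    ?_, c, ?_⟩
  · rintro x y hxy hy ⟨hx, hxc⟩
    exact ⟨fun hyW => hx (hW y x hxy.symm hxc hyW), hy⟩
  · refine le_antisymm le_top ⟨fun x _ => by by_cases x ∈ W <;> simp [*], fun x y hxy => ?_⟩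
    rw [Subgraph.top_adj] at hxy
    simp only [Subgraph.sup_adj, Subgraph.induce_adj, Subgraph.top_adj, Set.mem_insert_iff,
      Set.mem_compl_iff, hxy, and_true]
    by_cases hx : x ∈ W <;> by_cases hy : y ∈ W
    · exact Or.inl ⟨Or.inr hx, Or.inr hy⟩
    · by_cases hyc : y = c
      · exact Or.inl ⟨Or.inr hx, Or.inl hyc⟩
      · exact absurd (hW x y hxy hyc hx) hy
    · by_cases hxc : x = c
      · exact Or.inl ⟨Or.inl hxc, Or.inr hy⟩
      · exact absurd (hW y x hxy.symm hxc hy) hx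
    · exact Or.inr ⟨hx, hy⟩
  · ext x
    by_cases hx : x = c <;> simp [hx, hc]

section Walks

variable {ι : Type*} [Fintype ι] {u v : ι → V}

open Classical in
noncomputable def walksIn (P : ∀ i, G.Walk (u i) (v i)) (A : Set V) : Finset ι :=
  {i | ∀ x ∈ (P i).support, x ∈ A}

lemma card_walksIn_add_le (P : ∀ i, G.Walk (u i) (v i)) {A B : Set V} (hAB : Disjoint A B) :
    #(walksIn P A) + #(walksIn P B) ≤ Fintype.card ι := by
  classical
  rw [← card_union_of_disjoint]
  · exact card_le_univ _
  · simp only [walksIn, disjoint_filter]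
    exact fun i _ hA hB => Set.disjoint_left.mp hAB (hA _ (P i).start_mem_support)
      (hB _ (P i).start_mem_support)

lemma mem_walksIn_branch (P : ∀ i, G.Walk (u i) (v i)) {i : ι} (hc : c ∉ (P i).support) :
    i ∈ walksIn P (G.branch c (u i)) := by
  simpa [walksIn] using support_subset_branch (P i) hc

lemma card_le_card_filter_notMem_support_add_one [DecidableEq V]
    (P : ∀ i, G.Walk (u i) (v i))
    (hdisj : ∀ i j, i ≠ j → List.Disjoint (P i).support (P j).support) (c : V) :
    Fintype.card ι ≤ #{i | c ∉ (P i).support} + 1 := by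
  have hthrough : #{i | c ∈ (P i).support} ≤ 1 := by
    rw [card_le_one]
    intro i hi j hj
    by_contra hij
    exact hdisj i j hij (mem_filter.mp hi).2 (mem_filter.mp hj).2
  have := card_filter_add_card_filter_not (s := univ) (fun i => c ∈ (P i).support)
  rw [card_univ] at this
  omega

end Walks

end SimpleGraph

open SimpleGraph

theorem statement_6_general {V : Type*} [Fintype V] (l : ℕ)
    (S : SimpleGraph V) (hS : S.IsTree)
    (u v : Fin l → V) (P : (i : Fin l) → S.Walk (u i) (v i))
    (hdisj : ∀ i j, i ≠ j → List.Disjoint (P i).support (P j).support) :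
    ∃ A B : S.Subgraph, Divides A B ∧
      (∃ I : Finset (Fin l), (l : ℝ) / 3 - 1 ≤ I.card ∧
        ∀ i ∈ I, (P i).toSubgraph ≤ A) ∧
      (∃ J : Finset (Fin l), (l : ℝ) / 3 - 1 ≤ J.card ∧
        ∀ i ∈ J, (P i).toSubgraph ≤ B) := by
  classical
  obtain ⟨c, hc⟩ := hS.exists_forall_two_mul_weight_branch_le (fun A => #(walksIn P A)) l
    fun A B hAB => by simpa using card_walksIn_add_le P hAB
  set T : Finset (Fin l) := {i | c ∉ (P i).support}
  have hT : l ≤ #T + 1 := by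
    simpa using card_le_card_filter_notMem_support_add_one P hdisj c
  obtain ⟨K, hK₁, hK₂⟩ := exists_card_filter_mem_bounds T (fun i => S.branch c (u i)) l
    (fun i hi => by
      refine (Nat.mul_le_mul_left 2 (card_le_card fun j hj => ?_)).trans
        (hc (u i) fun h => (mem_filter.mp hi).2 (h ▸ (P i).start_mem_support))
      obtain ⟨hjT, hji⟩ := mem_filter.mp hj
      exact hji ▸ mem_walksIn_branch P (mem_filter.mp hjT).2) hT
  set U : Set V := {x | x ≠ c ∧ S.branch c x ∈ K}
  have hU : ∀ x y, S.Adj x y → y ≠ c → x ∈ U → y ∈ U := fun x y hxy hy ⟨hx, hxK⟩ =>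
    ⟨hy, branch_eq_of_mem (mem_branch_of_adj (mem_branch_self hx) hxy hy) ▸ hxK⟩
  have hmemU (i) (hi : i ∈ T) (x) (hx : x ∈ (P i).support) : x ∈ U ↔ S.branch c (u i) ∈ K := by
    have hxc := support_subset_branch (P i) (mem_filter.mp hi).2 x hx
    simp [U, ne_of_mem_branch hxc, branch_eq_of_mem hxc]
  have hsplit := card_filter_add_card_filter_not (s := T) fun i => S.branch c (u i) ∈ K
  refine ⟨_, _, divides_induce_insert_induce_compl hS.1 (fun h => h.1 rfl) hU,
    ⟨{i ∈ T | S.branch c (u i) ∈ K}, div_three_sub_one_le hK₁, fun i hi => ?_⟩,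
    ⟨{i ∈ T | S.branch c (u i) ∉ K}, div_three_sub_one_le (by omega), fun i hi => ?_⟩⟩
  · rw [mem_filter] at hi
    exact (P i).toSubgraph_le_induce_support.trans <| Subgraph.induce_mono_right fun x hx =>
      Set.mem_insert_of_mem c ((hmemU i hi.1 x hx).mpr hi.2)
  · rw [mem_filter] at hi
    exact (P i).toSubgraph_le_induce_support.trans <| Subgraph.induce_mono_right fun x hx hxU =>
      hi.2 ((hmemU i hi.1 x hx).mp hxU)

/-- Let `l` be a positive integer and let `S` be a tree containing pairwise
vertex-disjoint paths `P 0, …, P (l-1)`.  Then there exist two subtrees `A` and `B`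
which divide `S` such that `A` contains at least `l/3 − 1` of the paths as subgraphs,
and `B` also contains at least `l/3 − 1` of the paths as subgraphs. -/
theorem statement_6 {V : Type*} [Fintype V] (l : ℕ) (hl : 0 < l)
    (S : SimpleGraph V) (hS : S.IsTree)
    (u v : Fin l → V) (P : (i : Fin l) → S.Walk (u i) (v i))
    (hP : ∀ i, (P i).IsPath)
    (hdisj : ∀ i j, i ≠ j → List.Disjoint (P i).support (P j).support) :
    ∃ A B : S.Subgraph, Divides A B ∧
      (∃ I : Finset (Fin l), (l : ℝ) / 3 - 1 ≤ I.card ∧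
        ∀ i ∈ I, (P i).toSubgraph ≤ A) ∧
      (∃ J : Finset (Fin l), (l : ℝ) / 3 - 1 ≤ J.card ∧
        ∀ i ∈ J, (P i).toSubgraph ≤ B) :=
  statement_6_general l S hS u v P hdisj
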